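/- arXiv:1503.00566 — 2 statements merged into one kernel-verified Lean document; each statement's English description precedes it below -/
import Mathlib

section
/- Let c > 1 be a rational number and let γ_c : ℝ → ℝ² be the hypocycloid parametrization γ_c(φ) = ((c-1)·cos φ + cos((c-1)φ), (c-1)·sin φ − sin((c-1)φ)). If φ ≥ 0 is such that the arclength s = ∫₀^φ ‖γ_c'(ψ)‖ dψ is a rational number, then the squared polar radius ‖γ_c(φ)‖² is rational. In particular, for every positive integer n and every 1 ≤ k ≤ n, the squared polar radius of the k-th n-division point of the c-hypocycloid (the point at arclength k·ϖ_c/n from γ_c(0), where ϖ_c = 8b(c−1) is the total arclength and b is the denominator of c in lowest terms) is a rational number. -/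
/-!
The speed of the hypocycloid is `‖γ_c'(ψ)‖ = 2(c-1)|sin(cψ/2)|`, so its arclength from `0` to `φ`
is `4(c-1)/c · (2k + 1 - (-1)^k cos(cφ/2))`, where `k` counts the complete arches of `|sin|`
traversed. A rational arclength therefore makes `(-1)^k cos(cφ/2)` rational, and the squared
polar radius `(c-1)² + 1 + 2(c-1) cos(cφ)` is a polynomial with rational coefficients in
`cos²(cφ/2)`.
-/

open Real Set intervalIntegral MeasureTheory

lemma integral_abs_sin_of_le_pi {t : ℝ} (h0 : 0 ≤ t) (hπ : t ≤ π) :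
    ∫ u in (0 : ℝ)..t, |sin u| = 1 - cos t := by
  have hsin : EqOn (fun u => |sin u|) sin (uIcc 0 t) := fun u hu => by
    rw [uIcc_of_le h0] at hu
    exact abs_of_nonneg (sin_nonneg_of_nonneg_of_le_pi hu.1 (hu.2.trans hπ))
  rw [integral_congr hsin, integral_sin, cos_zero]

lemma periodic_abs_sin : Function.Periodic (fun u => |sin u|) π := fun u => by
  simp only [sin_add_pi, abs_neg]

lemma integral_abs_sin_of_mem_Icc {k : ℕ} {t : ℝ} (hk : k * π ≤ t) (ht : t ≤ (k + 1) * π) :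
    ∫ u in (0 : ℝ)..t, |sin u| = 2 * k + 1 - (-1) ^ k * cos t := by
  have hint (a b : ℝ) : IntervalIntegrable (fun u => |sin u|) volume a b :=
    continuous_sin.abs.intervalIntegrable a b
  have hfull : ∫ u in (0 : ℝ)..k * π, |sin u| = 2 * k := by
    have := periodic_abs_sin.intervalIntegral_add_zsmul_eq k 0 hint
    simp only [zero_add, Int.cast_natCast, zsmul_eq_mul] at this
    rw [this, integral_abs_sin_of_le_pi pi_pos.le le_rfl, cos_pi]
    ring
  have htail : ∫ u in k * π..t, |sin u| = 1 - (-1) ^ k * cos t := by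
    have := integral_comp_add_right (fun u => |sin u|) (k * π) (a := 0) (b := t - k * π)
    rw [zero_add, sub_add_cancel] at this
    rw [← this]
    simp only [periodic_abs_sin.nat_mul k _]
    rw [integral_abs_sin_of_le_pi (by linarith) (by linarith), cos_sub_nat_mul_pi]
  rw [← integral_add_adjacent_intervals (hint 0 (k * π)) (hint _ t), hfull, htail]
  ring

lemma exists_integral_abs_sin_eq {t : ℝ} (ht : 0 ≤ t) :
    ∃ k : ℕ, ∫ u in (0 : ℝ)..t, |sin u| = 2 * k + 1 - (-1) ^ k * cos t := by
  have hk := Nat.floor_le (div_nonneg ht pi_pos.le)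
  have hk' := Nat.lt_floor_add_one (t / π)
  refine ⟨⌊t / π⌋₊, integral_abs_sin_of_mem_Icc ?_ ?_⟩
  · rwa [le_div_iff₀ pi_pos] at hk
  · rw [div_lt_iff₀ pi_pos] at hk'
    exact hk'.le

noncomputable def hypocycloid (c φ : ℝ) : EuclideanSpace ℝ (Fin 2) :=
  !₂[(c - 1) * cos φ + cos ((c - 1) * φ), (c - 1) * sin φ - sin ((c - 1) * φ)]

lemma EuclideanSpace.norm_sq_fin_two (x : EuclideanSpace ℝ (Fin 2)) :
    ‖x‖ ^ 2 = x 0 ^ 2 + x 1 ^ 2 := by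
  simp [EuclideanSpace.norm_sq_eq, Fin.sum_univ_two]

lemma hasDerivAt_hypocycloid (c ψ : ℝ) :
    HasDerivAt (hypocycloid c)
      !₂[-(c - 1) * (sin ψ + sin ((c - 1) * ψ)), (c - 1) * (cos ψ - cos ((c - 1) * ψ))] ψ := by
  have hlin : HasDerivAt (fun x : ℝ => (c - 1) * x) (c - 1) ψ := by
    simpa using (hasDerivAt_id ψ).const_mul (c - 1)
  refine (PiLp.hasFDerivAt_toLp 2 _).comp_hasDerivAt (f := fun ψ =>
    ![(c - 1) * cos ψ + cos ((c - 1) * ψ), (c - 1) * sin ψ - sin ((c - 1) * ψ)])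
    ψ (hasDerivAt_pi.2 fun i => ?_)
  fin_cases i
  · exact (((hasDerivAt_cos ψ).const_mul (c - 1)).add ((hasDerivAt_cos _).comp ψ hlin)).congr_deriv
      (by simp; ring)
  · exact (((hasDerivAt_sin ψ).const_mul (c - 1)).sub ((hasDerivAt_sin _).comp ψ hlin)).congr_deriv
      (by simp; ring)

lemma norm_deriv_hypocycloid (c ψ : ℝ) :
    ‖deriv (hypocycloid c) ψ‖ = 2 * |c - 1| * |sin (c * ψ / 2)| := by
  have hadd : cos (c * ψ) = cos ψ * cos ((c - 1) * ψ) - sin ψ * sin ((c - 1) * ψ) := by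
    rw [← cos_add]; ring_nf
  have hhalf : cos (c * ψ) = 1 - 2 * sin (c * ψ / 2) ^ 2 := by
    rw [← cos_two_mul_eq_one_sub]; ring_nf
  rw [(hasDerivAt_hypocycloid c ψ).deriv]
  refine (pow_left_inj₀ (norm_nonneg _) (by positivity) two_ne_zero).1 ?_
  rw [EuclideanSpace.norm_sq_fin_two]
  simp only [Matrix.cons_val_zero, Matrix.cons_val_one, mul_pow, neg_sq, sq_abs]
  linear_combination (c - 1) ^ 2 *
    (sin_sq_add_cos_sq ψ + sin_sq_add_cos_sq ((c - 1) * ψ) + 2 * hadd - 2 * hhalf)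

lemma norm_hypocycloid_sq (c φ : ℝ) :
    ‖hypocycloid c φ‖ ^ 2 = (c - 1) ^ 2 + 1 + 2 * (c - 1) * cos (c * φ) := by
  have hadd : cos (c * φ) = cos φ * cos ((c - 1) * φ) - sin φ * sin ((c - 1) * φ) := by
    rw [← cos_add]; ring_nf
  rw [EuclideanSpace.norm_sq_fin_two]
  simp only [hypocycloid, Matrix.cons_val_zero, Matrix.cons_val_one]
  linear_combination
    (c - 1) ^ 2 * sin_sq_add_cos_sq φ + sin_sq_add_cos_sq ((c - 1) * φ) - 2 * (c - 1) * hadd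

lemma exists_integral_norm_deriv_hypocycloid_eq {c φ : ℝ} (hc : 0 < c) (hφ : 0 ≤ φ) :
    ∃ k : ℕ, ∫ ψ in (0 : ℝ)..φ, ‖deriv (hypocycloid c) ψ‖ =
      4 * |c - 1| / c * (2 * k + 1 - (-1) ^ k * cos (c * φ / 2)) := by
  obtain ⟨k, hk⟩ := exists_integral_abs_sin_eq (by positivity : 0 ≤ c / 2 * φ)
  refine ⟨k, ?_⟩
  simp_rw [norm_deriv_hypocycloid, mul_div_right_comm c, intervalIntegral.integral_const_mul]
  rw [integral_comp_mul_left (fun u => |sin u|) (by positivity), mul_zero, smul_eq_mul, hk]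
  field_simp
  ring

lemma exists_rat_norm_hypocycloid_sq {c : ℚ} (hc : 1 < c) {φ : ℝ} (hφ : 0 ≤ φ) {s : ℚ}
    (hs : ∫ ψ in (0 : ℝ)..φ, ‖deriv (hypocycloid c) ψ‖ = s) :
    ∃ q : ℚ, ‖hypocycloid c φ‖ ^ 2 = q := by
  have hc' : (1 : ℝ) < c := by exact_mod_cast hc
  have hc0 : (c : ℝ) ≠ 0 := by positivity
  have hc1 : (c : ℝ) - 1 ≠ 0 := (sub_pos.2 hc').ne'
  obtain ⟨k, hk⟩ := exists_integral_norm_deriv_hypocycloid_eq (zero_lt_one.trans hc') hφ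
  rw [hs, abs_of_pos (sub_pos.2 hc')] at hk
  set r : ℚ := 2 * k + 1 - c * s / (4 * (c - 1))
  have hr : (-1) ^ k * cos (c * φ / 2) = r := by
    push_cast [r]
    rw [hk]
    field_simp
    ring
  refine ⟨(c - 1) ^ 2 + 1 + 2 * (c - 1) * (2 * r ^ 2 - 1), ?_⟩
  have hdouble : cos (c * φ) = 2 * r ^ 2 - 1 := by
    rw [← hr, mul_pow, ← pow_mul, pow_mul', neg_one_sq, one_pow, one_mul, ← cos_two_mul]
    ring_nf
  rw [norm_hypocycloid_sq, hdouble]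
  push_cast
  ring

/-- For a rational `c > 1`, if a point of the `c`-hypocycloid is at rational
arclength `s` from the base point, then its squared polar radius is rational.
In particular, the squared polar radius of each `k`-th `n`-division point
(at arclength `k·ϖ_c/n`, where `ϖ_c = 8b(c−1)` with `b` the denominator of `c`)
is rational. -/
theorem hypocycloid_division_points_polar_radius_sq_rational (c : ℚ) (hc : 1 < c)
    (γ : ℝ → EuclideanSpace ℝ (Fin 2))
    (hγ : ∀ φ : ℝ, γ φ =
      ![((c : ℝ) - 1) * Real.cos φ + Real.cos (((c : ℝ) - 1) * φ),
        ((c : ℝ) - 1) * Real.sin φ - Real.sin (((c : ℝ) - 1) * φ)]) :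
    (∀ φ : ℝ, 0 ≤ φ → (∃ q : ℚ, (∫ ψ in (0 : ℝ)..φ, ‖deriv γ ψ‖) = (q : ℝ)) →
      ∃ q : ℚ, ‖γ φ‖ ^ 2 = (q : ℝ)) ∧
    (∀ n k : ℕ, 0 < n → 1 ≤ k → k ≤ n → ∀ φ : ℝ, 0 ≤ φ →
      (∫ ψ in (0 : ℝ)..φ, ‖deriv γ ψ‖) =
        (k : ℝ) * (8 * (c.den : ℝ) * ((c : ℝ) - 1)) / (n : ℝ) →
      ∃ q : ℚ, ‖γ φ‖ ^ 2 = (q : ℝ)) := by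
  obtain rfl : γ = hypocycloid c := funext fun φ => WithLp.ofLp_injective 2 (hγ φ)
  refine ⟨fun φ hφ ⟨s, hs⟩ => exists_rat_norm_hypocycloid_sq hc hφ hs,
    fun n k _ _ _ φ hφ hs => exists_rat_norm_hypocycloid_sq hc hφ
      (s := k * (8 * c.den * (c - 1)) / n) ?_⟩
  rw [hs]
  push_cast
  ring
end

section
/- The polynomial f_9(X) = 4·9⁴·X³ − (27·9⁴ − 288·9³ + 864·9²)·X − (27·9⁴ − 432·9³ + 2448·9² − 6912·9 + 10368) factors as f_9(X) = 81·(324X³ − 459X − 107), and the cubic 324X³ − 459X − 107 is irreducible over ℚ. Consequently, the x-coordinate of the first 9-division point of the tricuspoid has degree 3 over ℚ and is not a constructible number. -/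
open Real Polynomial

/-- A real number is constructible with straightedge and compass iff it can be
obtained from the rationals by field operations and taking square roots. -/
inductive IsConstructible : ℝ → Prop
  | rat (q : ℚ) : IsConstructible (q : ℝ)
  | add {a b : ℝ} : IsConstructible a → IsConstructible b → IsConstructible (a + b)
  | neg {a : ℝ} : IsConstructible a → IsConstructible (-a)
  | mul {a b : ℝ} : IsConstructible a → IsConstructible b → IsConstructible (a * b)
  | inv {a : ℝ} : IsConstructible a → IsConstructible a⁻¹
  | sqrt {a : ℝ} : 0 ≤ a → IsConstructible a → IsConstructible (Real.sqrt a)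

/-!
On the first arc of the tricuspoid the speed is `‖γ'(ψ)‖ = 4 sin (3ψ/2)`, so arclength `16/9`
means `cos (3φ/2) = 1/3`. With `u = cos (φ/2)` this reads `4u³ - 3u = 1/3`, while
`x = 8u⁴ - 4u² - 1`; eliminating `u` gives `324x³ - 459x - 107 = 0`. This cubic has no rational
root (for a root `q`, `18q` would be an integral root of `X³ - 459X - 1926`, which has no root
mod 5), so it is irreducible and `x` has degree 3. A constructible number lies in a tower of
quadratic extensions of `ℚ`, so its degree is a power of 2.
-/

open Module IntermediateField

theorem IntermediateField.exists_finrank_two_pow_of_sq_mem {F E : Type*} [Field F] [Field E]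
    [Algebra F E] {K : IntermediateField F E} {m : ℕ} (hK : finrank F K = 2 ^ m) {s : E}
    (hs : s ^ 2 ∈ K) : ∃ L : IntermediateField F E, K ≤ L ∧ s ∈ L ∧ ∃ n, finrank F L = 2 ^ n := by
  set p : K[X] := X ^ 2 - C ⟨s ^ 2, hs⟩
  have hp : p ≠ 0 := X_pow_sub_C_ne_zero two_pos _
  have hps : aeval s p = 0 := by simp [p]
  have hint : IsIntegral K s := ⟨p, monic_X_pow_sub_C _ two_ne_zero, hps⟩
  have hdeg_le : (minpoly K s).natDegree ≤ 2 :=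
    (natDegree_le_of_dvd (minpoly.dvd K s hps) hp).trans natDegree_X_pow_sub_C.le
  have hdeg_pos : 0 < (minpoly K s).natDegree := minpoly.natDegree_pos hint
  set M : IntermediateField K E := K⟮s⟯
  have : FiniteDimensional K M := adjoin.finiteDimensional hint
  refine ⟨M.restrictScalars F, fun y hy => M.algebraMap_mem ⟨y, hy⟩,
    mem_adjoin_simple_self K s, ?_⟩
  have htower : finrank F (M.restrictScalars F) = 2 ^ m * (minpoly K s).natDegree := by
    rw [← hK, ← adjoin.finrank hint]
    have : Free K M := .of_divisionRing K M
    exact (finrank_mul_finrank F K M).symm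
  rw [htower]
  interval_cases (minpoly K s).natDegree
  · exact ⟨m, mul_one _⟩
  · exact ⟨m + 1, (pow_succ 2 m).symm⟩

-- Carrying `K` along lets the towers for `a` and `b` be stacked in the `add` and `mul` cases.
theorem IsConstructible.exists_finrank_two_pow {a : ℝ} (ha : IsConstructible a)
    {K : IntermediateField ℚ ℝ} {m : ℕ} (hK : finrank ℚ K = 2 ^ m) :
    ∃ L : IntermediateField ℚ ℝ, K ≤ L ∧ a ∈ L ∧ ∃ n, finrank ℚ L = 2 ^ n := by
  induction ha generalizing K m with
  | rat q => exact ⟨K, le_rfl, K.algebraMap_mem q, m, hK⟩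
  | add _ _ iha ihb =>
    obtain ⟨L₁, hKL₁, haL₁, _, hL₁⟩ := iha hK
    obtain ⟨L₂, hL₁L₂, hbL₂, hL₂⟩ := ihb hL₁
    exact ⟨L₂, hKL₁.trans hL₁L₂, L₂.add_mem (hL₁L₂ haL₁) hbL₂, hL₂⟩
  | mul _ _ iha ihb =>
    obtain ⟨L₁, hKL₁, haL₁, _, hL₁⟩ := iha hK
    obtain ⟨L₂, hL₁L₂, hbL₂, hL₂⟩ := ihb hL₁
    exact ⟨L₂, hKL₁.trans hL₁L₂, L₂.mul_mem (hL₁L₂ haL₁) hbL₂, hL₂⟩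
  | neg _ iha =>
    obtain ⟨L, hKL, haL, hL⟩ := iha hK
    exact ⟨L, hKL, L.neg_mem haL, hL⟩
  | inv _ iha =>
    obtain ⟨L, hKL, haL, hL⟩ := iha hK
    exact ⟨L, hKL, L.inv_mem haL, hL⟩
  | sqrt ha₀ _ iha =>
    obtain ⟨L, hKL, haL, n, hL⟩ := iha hK
    obtain ⟨M, hLM, hM⟩ := exists_finrank_two_pow_of_sq_mem hL
      (by rwa [sq_sqrt ha₀] : √_ ^ 2 ∈ L)
    exact ⟨M, hKL.trans hLM, hM⟩

theorem IsConstructible.exists_natDegree_minpoly_eq_two_pow {x : ℝ} (hx : IsConstructible x) :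
    ∃ n, (minpoly ℚ x).natDegree = 2 ^ n := by
  obtain ⟨L, -, hxL, n, hL⟩ := hx.exists_finrank_two_pow (K := ⊥) (m := 0)
    IntermediateField.finrank_bot
  have : FiniteDimensional ℚ L := finite_of_finrank_pos (by rw [hL]; positivity)
  have hdvd : (minpoly ℚ (⟨x, hxL⟩ : L)).natDegree ∣ 2 ^ n :=
    hL ▸ minpoly.degree_dvd (Algebra.IsIntegral.isIntegral _)
  rw [← minpoly.algebraMap_eq (algebraMap L ℝ).injective] at hdvd
  obtain ⟨k, -, hk⟩ := (Nat.dvd_prime_pow Nat.prime_two).1 hdvd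
  exact ⟨k, hk⟩

theorem natDegree_minpoly_eq_of_irreducible {F A : Type*} [Field F] [Ring A] [Algebra F A]
    [Nontrivial A] {p : F[X]} (hp : Irreducible p) {x : A} (hx : aeval x p = 0) :
    (minpoly F x).natDegree = p.natDegree := by
  rw [← minpoly.eq_of_irreducible hp hx,
    natDegree_mul_C (inv_ne_zero (leadingCoeff_ne_zero.2 hp.ne_zero))]

noncomputable def nineDivisionCubic : ℚ[X] := C 324 * X ^ 3 - C 459 * X - C 107

theorem int_cube_sub_ne_zero (n : ℤ) : n ^ 3 - 459 * n - 1926 ≠ 0 := by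
  have hmod5 : ∀ z : ZMod 5, z ^ 3 - 459 * z - 1926 ≠ 0 := by decide
  intro h
  exact hmod5 n (by exact_mod_cast congrArg (Int.cast : ℤ → ZMod 5) h)

theorem not_isRoot_nineDivisionCubic (q : ℚ) : ¬ nineDivisionCubic.IsRoot q := by
  intro h
  replace h : 324 * q ^ 3 - 459 * q - 107 = 0 := by simpa [nineDivisionCubic] using h
  have hint : IsIntegral ℤ (18 * q) := by
    refine ⟨X ^ 3 - C 459 * X - C 1926, by monicity!, ?_⟩
    simp only [eval₂_sub, eval₂_mul, eval₂_X_pow, eval₂_X, eval₂_ofNat, algebraMap_int_eq,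
      eq_intCast, Int.cast_ofNat]
    linear_combination 18 * h
  obtain ⟨n, hn⟩ := IsIntegrallyClosed.isIntegral_iff.1 hint
  refine int_cube_sub_ne_zero n (Int.cast_injective (α := ℚ) ?_)
  push_cast
  rw [show (n : ℚ) = 18 * q from hn]
  linear_combination 18 * h

theorem natDegree_nineDivisionCubic : nineDivisionCubic.natDegree = 3 := by
  unfold nineDivisionCubic; compute_degree!

theorem irreducible_nineDivisionCubic : Irreducible nineDivisionCubic := by
  rw [irreducible_iff_roots_eq_zero_of_degree_le_three (by rw [natDegree_nineDivisionCubic]; norm_num)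
    natDegree_nineDivisionCubic.le, Multiset.eq_zero_iff_forall_notMem]
  exact fun q hq => not_isRoot_nineDivisionCubic q (mem_roots'.1 hq).2

noncomputable def tricuspoid (φ : ℝ) : EuclideanSpace ℝ (Fin 2) :=
  WithLp.toLp 2 ![2 * cos φ + cos (2 * φ), 2 * sin φ - sin (2 * φ)]

theorem hasDerivAt_tricuspoid (ψ : ℝ) :
    HasDerivAt tricuspoid
      (WithLp.toLp 2 ![-2 * sin ψ - 2 * sin (2 * ψ), 2 * cos ψ - 2 * cos (2 * ψ)]) ψ := by
  have hx : HasDerivAt (fun φ => 2 * cos φ + cos (2 * φ)) (-2 * sin ψ - 2 * sin (2 * ψ)) ψ :=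
    (((hasDerivAt_cos ψ).const_mul 2).add ((hasDerivAt_cos (2 * ψ)).comp ψ
      ((hasDerivAt_id ψ).const_mul 2))).congr_deriv (by ring)
  have hy : HasDerivAt (fun φ => 2 * sin φ - sin (2 * φ)) (2 * cos ψ - 2 * cos (2 * ψ)) ψ :=
    (((hasDerivAt_sin ψ).const_mul 2).sub ((hasDerivAt_sin (2 * ψ)).comp ψ
      ((hasDerivAt_id ψ).const_mul 2))).congr_deriv (by ring)
  have hpi : HasDerivAt (fun φ => ![2 * cos φ + cos (2 * φ), 2 * sin φ - sin (2 * φ)])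
      ![-2 * sin ψ - 2 * sin (2 * ψ), 2 * cos ψ - 2 * cos (2 * ψ)] ψ := by
    refine hasDerivAt_pi.2 fun i => ?_
    fin_cases i
    exacts [hx, hy]
  exact (PiLp.hasFDerivAt_toLp 2 _).comp_hasDerivAt ψ hpi

theorem norm_deriv_tricuspoid (ψ : ℝ) : ‖deriv tricuspoid ψ‖ = 4 * |sin (3 * ψ / 2)| := by
  have hsq : (-2 * sin ψ - 2 * sin (2 * ψ)) ^ 2 + (2 * cos ψ - 2 * cos (2 * ψ)) ^ 2
      = (4 * sin (3 * ψ / 2)) ^ 2 := by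
    have h3 : cos (3 * ψ) = cos (2 * ψ) * cos ψ - sin (2 * ψ) * sin ψ := by
      rw [show 3 * ψ = 2 * ψ + ψ by ring, cos_add]
    have h3' : cos (3 * ψ) = 2 * cos (3 * ψ / 2) ^ 2 - 1 := by
      rw [← cos_two_mul, mul_div_cancel₀ _ two_ne_zero]
    linear_combination 4 * sin_sq_add_cos_sq ψ + 4 * sin_sq_add_cos_sq (2 * ψ) + 8 * h3 - 8 * h3'
      - 16 * sin_sq_add_cos_sq (3 * ψ / 2)
  rw [(hasDerivAt_tricuspoid ψ).deriv, EuclideanSpace.norm_eq, Fin.sum_univ_two]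
  simp only [Matrix.cons_val_zero, Matrix.cons_val_one, Real.norm_eq_abs, sq_abs]
  rw [hsq, sqrt_sq_eq_abs, abs_mul, abs_of_pos four_pos]

theorem integral_norm_deriv_tricuspoid {φ : ℝ} (h₀ : 0 ≤ φ) (h₁ : φ ≤ 2 * π / 3) :
    ∫ ψ in (0 : ℝ)..φ, ‖deriv tricuspoid ψ‖ = 8 / 3 * (1 - cos (3 * φ / 2)) := by
  have hsin : ∀ ψ ∈ Set.uIcc 0 φ, ‖deriv tricuspoid ψ‖ = 4 * sin (3 / 2 * ψ) := by
    intro ψ hψ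
    rw [Set.uIcc_of_le h₀] at hψ
    rw [norm_deriv_tricuspoid, abs_of_nonneg, mul_div_right_comm]
    apply sin_nonneg_of_nonneg_of_le_pi <;> linarith [hψ.1, hψ.2]
  rw [intervalIntegral.integral_congr hsin, intervalIntegral.integral_const_mul,
    intervalIntegral.integral_comp_mul_left sin (by norm_num : (3 / 2 : ℝ) ≠ 0), integral_sin,
    mul_zero, cos_zero, smul_eq_mul, mul_div_right_comm 3 φ 2]
  ring

theorem aeval_nineDivisionCubic_of_cos_three_half {φ : ℝ} (h : cos (3 * φ / 2) = 1 / 3) :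
    aeval (2 * cos φ + cos (2 * φ)) nineDivisionCubic = 0 := by
  set u := cos (φ / 2)
  have hu : 4 * u ^ 3 - 3 * u = 1 / 3 := by
    rw [← h, show 3 * φ / 2 = 3 * (φ / 2) by ring, cos_three_mul]
  have hcos : cos φ = 2 * u ^ 2 - 1 := by
    rw [← cos_two_mul, mul_div_cancel₀ φ two_ne_zero]
  simp only [nineDivisionCubic, map_sub, map_mul, aeval_C, aeval_X, map_pow, eq_ratCast,
    Rat.cast_ofNat]
  rw [cos_two_mul, hcos]
  -- the cofactor is the quotient of the cubic, evaluated at `8u⁴ - 4u² - 1`, by `12u³ - 9u - 1`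
  linear_combination 3 * (13824 * u ^ 9 - 10368 * u ^ 7 + 1152 * u ^ 6 - 2592 * u ^ 5
    + 1608 * u ^ 3 - 216 * u ^ 2 + 252 * u - 28) * hu

/-- `f₉` factors as `81(324X³ − 459X − 107)`, with `324X³ − 459X − 107`
irreducible over `ℚ`; consequently the `x`-coordinate of the first `9`-division
point of the tricuspoid has degree `3` over `ℚ` and is not constructible. -/
theorem tricuspoid_nine_division_point_not_constructible
    (f₉ : Polynomial ℚ)
    (hf : f₉ = C (4 * (9 : ℚ) ^ 4) * X ^ 3
      - C (27 * (9 : ℚ) ^ 4 - 288 * (9 : ℚ) ^ 3 + 864 * (9 : ℚ) ^ 2) * X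
      - C (27 * (9 : ℚ) ^ 4 - 432 * (9 : ℚ) ^ 3 + 2448 * (9 : ℚ) ^ 2
            - 6912 * (9 : ℚ) + 10368)) :
    f₉ = C 81 * (C 324 * X ^ 3 - C 459 * X - C 107) ∧
    Irreducible (C (324 : ℚ) * X ^ 3 - C 459 * X - C 107) ∧
    ∀ (γ : ℝ → EuclideanSpace ℝ (Fin 2)),
      (∀ φ : ℝ, γ φ =
        ![2 * Real.cos φ + Real.cos (2 * φ),
          2 * Real.sin φ - Real.sin (2 * φ)]) →
      ∀ φ : ℝ, 0 ≤ φ → φ ≤ 2 * π / 3 →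
        (∫ ψ in (0 : ℝ)..φ, ‖deriv γ ψ‖) = 16 / 9 →
        ∀ x : ℝ, x = 2 * Real.cos φ + Real.cos (2 * φ) →
          (minpoly ℚ x).natDegree = 3 ∧ ¬ IsConstructible x := by
  refine ⟨?_, irreducible_nineDivisionCubic, ?_⟩
  · rw [hf]
    simp only [map_sub, map_add, map_mul, map_pow, map_ofNat]
    ring
  rintro γ hγ φ hφ₀ hφ₁ hlength x rfl
  obtain rfl : γ = tricuspoid := funext fun φ => WithLp.ofLp_injective 2 (hγ φ)
  rw [integral_norm_deriv_tricuspoid hφ₀ hφ₁] at hlength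
  have hdeg : (minpoly ℚ (2 * cos φ + cos (2 * φ))).natDegree = 3 := by
    rw [natDegree_minpoly_eq_of_irreducible irreducible_nineDivisionCubic
      (aeval_nineDivisionCubic_of_cos_three_half (by linarith)), natDegree_nineDivisionCubic]
  refine ⟨hdeg, fun hc => ?_⟩
  obtain ⟨n, hn⟩ := hc.exists_natDegree_minpoly_eq_two_pow
  have h32 : 3 ∣ 2 := Nat.prime_three.dvd_of_dvd_pow (hdeg ▸ hn ▸ dvd_rfl : 3 ∣ 2 ^ n)
  omega
end
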